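/- arXiv:2504.12589 — 3 statements merged into one kernel-verified Lean document; each statement's English description precedes it below -/
import Mathlib

section
/- For every real p with 1/2 < p < 1 and every natural number m, the Binomial majority-voting error rate strictly decreases when the odd ensemble size grows from 2m+1 to 2m+3: ∑_{s=0}^{m+1} C(2m+3, s) · p^s · (1−p)^{2m+3−s} < ∑_{s=0}^{m} C(2m+1, s) · p^s · (1−p)^{2m+1−s}. -/
/-! With `q = 1 - p`, the lower tail `F_n(j) = binomialLowerTail p q n j = ℙ(Bin(n, p) < j)`
satisfies Pascal's rule `F_{n+1}(j+1) = q F_n(j+1) + p F_n(j)` (condition on the last judge).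
Applying it twice expresses `F_{2m+3}(m+2)` through `F_{2m+1}(m)`, `F_{2m+1}(m+1)` and
`F_{2m+1}(m+2)`, which differ only by the two central terms; these almost cancel, leaving
`F_{2m+3}(m+2) = F_{2m+1}(m+1) - C(2m+1, m) (pq)^{m+1} (p - q)`, and `p > q` makes the correction
positive. -/

open Finset

noncomputable def binomialLowerTail (p q : ℝ) (n j : ℕ) : ℝ :=
  ∑ s ∈ range j, (n.choose s : ℝ) * p ^ s * q ^ (n - s)

namespace binomialLowerTail

variable (p q : ℝ)

lemma succ (n j : ℕ) :
    binomialLowerTail p q n (j + 1)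
      = binomialLowerTail p q n j + (n.choose j : ℝ) * p ^ j * q ^ (n - j) :=
  sum_range_succ _ _

lemma choose_succ_mul_pow (n s : ℕ) :
    ((n + 1).choose (s + 1) : ℝ) * p ^ (s + 1) * q ^ (n - s)
      = q * ((n.choose (s + 1) : ℝ) * p ^ (s + 1) * q ^ (n - (s + 1)))
        + p * ((n.choose s : ℝ) * p ^ s * q ^ (n - s)) := by
  rw [Nat.choose_succ_succ, Nat.cast_add]
  rcases lt_or_ge s n with hs | hs
  · rw [show n - s = n - (s + 1) + 1 by omega]
    ring
  · rw [Nat.choose_eq_zero_of_lt (by omega : n < s + 1)]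
    ring

lemma succ_succ (n j : ℕ) :
    binomialLowerTail p q (n + 1) (j + 1)
      = q * binomialLowerTail p q n (j + 1) + p * binomialLowerTail p q n j := by
  induction j with
  | zero => simp [binomialLowerTail, pow_succ, mul_comm]
  | succ j ih =>
    rw [succ, ih, succ _ _ n (j + 1), succ _ _ n j, Nat.add_sub_add_right,
      choose_succ_mul_pow]
    ring

lemma odd_add_two (m : ℕ) :
    binomialLowerTail p q (2 * m + 3) (m + 2)
      = (p + q) ^ 2 * binomialLowerTail p q (2 * m + 1) (m + 1)
        - ((2 * m + 1).choose m : ℝ) * (p * q) ^ (m + 1) * (p - q) := by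
  have upper := succ p q (2 * m + 1) (m + 1)
  have lower := succ p q (2 * m + 1) m
  rw [Nat.choose_symm_half, show 2 * m + 1 - (m + 1) = m by omega] at upper
  rw [show 2 * m + 1 - m = m + 1 by omega] at lower
  rw [succ_succ p q (2 * m + 2) (m + 1), succ_succ p q (2 * m + 1) (m + 1),
    succ_succ p q (2 * m + 1) m, upper, lower]
  ring

end binomialLowerTail

/-- Condorcet-type monotonicity: for `1/2 < p < 1`, the Binomial majority-voting
error rate strictly decreases when the odd ensemble size grows from `2m+1` to `2m+3`. -/
theorem binomial_majority_error_strict_decreasing (p : ℝ) (hp : 1 / 2 < p) (hp1 : p < 1)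
    (m : ℕ) :
    ∑ s ∈ Finset.range (m + 2),
        ((2 * m + 3).choose s : ℝ) * p ^ s * (1 - p) ^ (2 * m + 3 - s)
      < ∑ s ∈ Finset.range (m + 1),
          ((2 * m + 1).choose s : ℝ) * p ^ s * (1 - p) ^ (2 * m + 1 - s) := by
  change binomialLowerTail p (1 - p) (2 * m + 3) (m + 2)
    < binomialLowerTail p (1 - p) (2 * m + 1) (m + 1)
  have central_pos :
      0 < ((2 * m + 1).choose m : ℝ) * (p * (1 - p)) ^ (m + 1) * (p - (1 - p)) := by
    have : 0 < 1 - p := by linarith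
    have : 0 < p - (1 - p) := by linarith
    have : 0 < ((2 * m + 1).choose m : ℝ) := by exact_mod_cast Nat.choose_pos (by omega)
    positivity
  rw [binomialLowerTail.odd_add_two, add_sub_cancel, one_pow, one_mul]
  linarith
end

section
/- For all reals α, β > 0, the Beta-Binomial majority-voting error rate over odd ensemble sizes converges to the Beta cumulative probability of the interval below one half: the sequence m ↦ ∑_{s=0}^{m} C(2m+1, s) · B(s+α, 2m+1−s+β) / B(α, β) converges, as m → ∞, to (1/B(α,β)) · ∫_0^{1/2} x^{α−1}·(1−x)^{β−1} dx. -/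
/-!
Writing `w(t) = t^(α-1) (1-t)^(β-1)`, each Beta value `B(s+α, k-s+β)` is
`∫₀¹ t^s (1-t)^(k-s) w(t) dt`, so the `m`-th error rate is `∫₀¹ F_m(t) w(t) dt / B(α,β)`,
where `F_m(t)` is the probability that at most `m` of `2m+1` independent votes with success
probability `t` succeed. For `t ≠ 1/2` the majority is decided exponentially fast: `F_m(t)` tends
to `1` for `t < 1/2` and to `0` for `t > 1/2`, at rate `(4t(1-t))^m`, and the case `t < 1/2`
follows from `t > 1/2` by the symmetry `F_m(t) + F_m(1-t) = 1`. Since `0 ≤ F_m ≤ 1` and `w` is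
integrable, dominated convergence gives the limit `∫₀^{1/2} w / B(α,β)`.
-/

open scoped BigOperators
open Filter

/-- The Beta function `B(a,b) = ∫_0^1 t^(a-1) (1-t)^(b-1) dt`. -/
noncomputable def betaFn (a b : ℝ) : ℝ :=
  ∫ t in (0:ℝ)..1, t ^ (a - 1) * (1 - t) ^ (b - 1)

open Finset MeasureTheory Real

/-- `binomLowerHalf m t (1 - t)` is the probability that at most `m` of `2m+1` independent votes,
each correct with probability `t`, are correct. -/
noncomputable def binomLowerHalf (m : ℕ) (x y : ℝ) : ℝ :=
  ∑ s ∈ range (m + 1), ((2 * m + 1).choose s : ℝ) * x ^ s * y ^ (2 * m + 1 - s)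

theorem binomLowerHalf_add_swap (m : ℕ) (x y : ℝ) :
    binomLowerHalf m x y + binomLowerHalf m y x = (x + y) ^ (2 * m + 1) := by
  have hreflect : binomLowerHalf m y x = ∑ j ∈ range (m + 1),
      x ^ (m + 1 + j) * y ^ (2 * m + 1 - (m + 1 + j)) * ((2 * m + 1).choose (m + 1 + j) : ℝ) := by
    rw [binomLowerHalf, ← sum_range_reflect]
    refine sum_congr rfl fun j hj => ?_
    have hj : j ≤ m := Nat.lt_succ_iff.1 (mem_range.1 hj)
    rw [Nat.choose_symm_of_eq_add (show 2 * m + 1 = (m + 1 - 1 - j) + (m + 1 + j) by omega),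
      show m + 1 - 1 - j = 2 * m + 1 - (m + 1 + j) by omega,
      show 2 * m + 1 - (2 * m + 1 - (m + 1 + j)) = m + 1 + j by omega]
    ring
  rw [hreflect, add_pow, show 2 * m + 1 + 1 = (m + 1) + (m + 1) by ring,
    sum_range_add _ (m + 1) (m + 1), binomLowerHalf]
  congr 1
  exact sum_congr rfl fun s _ => by ring

theorem binomLowerHalf_nonneg (m : ℕ) {x y : ℝ} (hx : 0 ≤ x) (hy : 0 ≤ y) :
    0 ≤ binomLowerHalf m x y :=
  sum_nonneg fun _ _ => by positivity

theorem binomLowerHalf_le_of_le (m : ℕ) {x y : ℝ} (hy : 0 ≤ y) (hyx : y ≤ x) :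
    binomLowerHalf m x y ≤ 2 * y * (4 * x * y) ^ m := by
  have hx : 0 ≤ x := hy.trans hyx
  calc binomLowerHalf m x y
      ≤ ∑ s ∈ range (m + 1), ((2 * m + 1).choose s : ℝ) * (x ^ m * y ^ (m + 1)) := by
        refine sum_le_sum fun s hs => ?_
        have hs : s ≤ m := Nat.lt_succ_iff.1 (mem_range.1 hs)
        rw [mul_assoc]
        refine mul_le_mul_of_nonneg_left ?_ (by positivity)
        calc x ^ s * y ^ (2 * m + 1 - s) = x ^ s * y ^ (m - s) * y ^ (m + 1) := by
              rw [mul_assoc, ← pow_add, show m - s + (m + 1) = 2 * m + 1 - s by omega]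
          _ ≤ x ^ s * x ^ (m - s) * y ^ (m + 1) := by gcongr
          _ = x ^ m * y ^ (m + 1) := by rw [← pow_add, Nat.add_sub_cancel' hs]
    _ ≤ ∑ s ∈ range (2 * m + 1 + 1), ((2 * m + 1).choose s : ℝ) * (x ^ m * y ^ (m + 1)) :=
        sum_le_sum_of_subset_of_nonneg (range_subset_range.2 (by omega))
          fun _ _ _ => by positivity
    _ = 2 ^ (2 * m + 1) * (x ^ m * y ^ (m + 1)) := by
        rw [← sum_mul, ← Nat.cast_sum, Nat.sum_range_choose, Nat.cast_pow, Nat.cast_ofNat]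
    _ = 2 * y * (4 * x * y) ^ m := by
        rw [mul_pow, mul_pow, show (4 : ℝ) = 2 ^ 2 by norm_num, ← pow_mul]
        ring

theorem binomLowerHalf_one_sub (m : ℕ) (t : ℝ) :
    binomLowerHalf m t (1 - t) = 1 - binomLowerHalf m (1 - t) t := by
  have h := binomLowerHalf_add_swap m t (1 - t)
  rw [add_sub_cancel, one_pow] at h
  linarith

theorem binomLowerHalf_le_one (m : ℕ) {t : ℝ} (ht0 : 0 ≤ t) (ht1 : t ≤ 1) :
    binomLowerHalf m t (1 - t) ≤ 1 := by
  rw [binomLowerHalf_one_sub]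
  linarith [binomLowerHalf_nonneg m (sub_nonneg.2 ht1) ht0]

theorem tendsto_binomLowerHalf_zero {t : ℝ} (ht : 1 / 2 < t) (ht1 : t ≤ 1) :
    Tendsto (fun m => binomLowerHalf m t (1 - t)) atTop (nhds 0) := by
  have hgeom := (tendsto_pow_atTop_nhds_zero_of_lt_one (r := 4 * t * (1 - t))
    (by nlinarith) (by nlinarith)).const_mul (2 * (1 - t))
  rw [mul_zero] at hgeom
  exact squeeze_zero (fun m => binomLowerHalf_nonneg m (by linarith) (by linarith))
    (fun m => binomLowerHalf_le_of_le m (by linarith) (by linarith)) hgeom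

theorem tendsto_binomLowerHalf_one {t : ℝ} (ht0 : 0 ≤ t) (ht : t < 1 / 2) :
    Tendsto (fun m => binomLowerHalf m t (1 - t)) atTop (nhds 1) := by
  have h := (tendsto_binomLowerHalf_zero (t := 1 - t) (by linarith) (by linarith)).const_sub 1
  rw [sub_zero, sub_sub_cancel] at h
  simpa only [binomLowerHalf_one_sub] using h

theorem tendsto_integral_binomLowerHalf_mul {w : ℝ → ℝ} (hw : IntervalIntegrable w volume 0 1) :
    Tendsto (fun m => ∫ t in (0 : ℝ)..1, binomLowerHalf m t (1 - t) * w t) atTop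
      (nhds (∫ t in (0 : ℝ)..(1 / 2), w t)) := by
  have hlim :
      ∫ t in (0 : ℝ)..1, (Set.Iic (1 / 2)).indicator w t = ∫ t in (0 : ℝ)..(1 / 2), w t := by
    rw [intervalIntegral.integral_of_le zero_le_one, intervalIntegral.integral_of_le (by norm_num),
      setIntegral_indicator measurableSet_Iic, Set.Ioc_inter_Iic, inf_of_le_right (by norm_num)]
  rw [← hlim]
  refine intervalIntegral.tendsto_integral_filter_of_dominated_convergence (fun t => ‖w t‖)
    (Eventually.of_forall fun m => ?_) (Eventually.of_forall fun m => ?_) hw.norm ?_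
  · rw [Set.uIoc_of_le zero_le_one]
    exact (Continuous.aestronglyMeasurable (by unfold binomLowerHalf; fun_prop)).mul
      hw.aestronglyMeasurable
  · refine ae_of_all _ fun t ht => ?_
    rw [Set.uIoc_of_le zero_le_one] at ht
    rw [norm_mul]
    refine mul_le_of_le_one_left (norm_nonneg _) ?_
    rw [norm_of_nonneg (binomLowerHalf_nonneg m ht.1.le (sub_nonneg.2 ht.2))]
    exact binomLowerHalf_le_one m ht.1.le ht.2
  · filter_upwards [Measure.ae_ne volume (1 / 2)] with t hne ht
    rw [Set.uIoc_of_le zero_le_one] at ht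
    rcases hne.lt_or_gt with hlt | hgt
    · rw [Set.indicator_of_mem (Set.mem_Iic.2 hlt.le)]
      simpa only [one_mul] using (tendsto_binomLowerHalf_one ht.1.le hlt).mul_const (w t)
    · rw [Set.indicator_of_notMem (Set.notMem_Iic.2 hgt)]
      simpa only [zero_mul] using (tendsto_binomLowerHalf_zero hgt ht.2).mul_const (w t)

theorem intervalIntegrable_rpow_mul_one_sub_rpow_zero_half {a : ℝ} (ha : 0 < a) (b : ℝ) :
    IntervalIntegrable (fun t : ℝ => t ^ (a - 1) * (1 - t) ^ (b - 1)) volume 0 (1 / 2) := by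
  refine (intervalIntegral.intervalIntegrable_rpow' (by linarith)).mul_continuousOn
    (ContinuousOn.rpow_const (by fun_prop) fun t ht => Or.inl ?_)
  rw [Set.uIcc_of_le (by norm_num)] at ht
  linarith [ht.2]

theorem intervalIntegrable_betaIntegrand {a b : ℝ} (ha : 0 < a) (hb : 0 < b) :
    IntervalIntegrable (fun t : ℝ => t ^ (a - 1) * (1 - t) ^ (b - 1)) volume 0 1 := by
  -- on `[1/2, 1]`, reflect `t ↦ 1 - t`, which swaps the roles of `a` and `b`
  have hright := (intervalIntegrable_rpow_mul_one_sub_rpow_zero_half hb a).comp_sub_left 1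
  simp only [sub_sub_cancel, mul_comm] at hright
  norm_num at hright
  exact (intervalIntegrable_rpow_mul_one_sub_rpow_zero_half ha b).trans hright.symm

theorem betaFn_natCast_add (s k : ℕ) (a b : ℝ) :
    betaFn (s + a) (k + b)
      = ∫ t in (0 : ℝ)..1, t ^ s * (1 - t) ^ k * (t ^ (a - 1) * (1 - t) ^ (b - 1)) := by
  simp only [betaFn, intervalIntegral.integral_of_le zero_le_one, integral_Ioc_eq_integral_Ioo]
  refine setIntegral_congr_fun measurableSet_Ioo fun t ⟨h0, h1⟩ => ?_
  rw [add_sub_assoc, add_sub_assoc, rpow_add h0, rpow_add (sub_pos.2 h1), rpow_natCast,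
    rpow_natCast]
  ring

theorem sum_choose_mul_betaFn {a b : ℝ} (ha : 0 < a) (hb : 0 < b) (m : ℕ) :
    ∑ s ∈ range (m + 1), ((2 * m + 1).choose s : ℝ) * betaFn (s + a) ((2 * m + 1 : ℝ) - s + b)
      = ∫ t in (0 : ℝ)..1, binomLowerHalf m t (1 - t) * (t ^ (a - 1) * (1 - t) ^ (b - 1)) := by
  have hw := intervalIntegrable_betaIntegrand ha hb
  have hterm : ∀ s ∈ range (m + 1),
      ((2 * m + 1).choose s : ℝ) * betaFn (s + a) ((2 * m + 1 : ℝ) - s + b)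
        = ∫ t in (0 : ℝ)..1, ((2 * m + 1).choose s : ℝ) * t ^ s * (1 - t) ^ (2 * m + 1 - s)
            * (t ^ (a - 1) * (1 - t) ^ (b - 1)) := by
    intro s hs
    have hs : s ≤ 2 * m + 1 := by have := mem_range.1 hs; omega
    rw [show (2 * m + 1 : ℝ) - s = ((2 * m + 1 - s : ℕ) : ℝ) by push_cast [Nat.cast_sub hs]; ring,
      betaFn_natCast_add, ← intervalIntegral.integral_const_mul]
    simp only [mul_assoc]
  rw [sum_congr rfl hterm, ← intervalIntegral.integral_finsetSum
    fun s _ => hw.continuousOn_mul (by fun_prop)]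
  simp only [binomLowerHalf, sum_mul]

/-- The Beta-Binomial majority-voting error rate over odd ensemble sizes `k = 2m+1`
converges to the Beta cumulative probability of `[0, 1/2)`. -/
theorem betaBinomial_majority_error_tendsto (α β : ℝ) (hα : 0 < α) (hβ : 0 < β) :
    Tendsto
      (fun m : ℕ => ∑ s ∈ Finset.range (m + 1),
        ((2 * m + 1).choose s : ℝ)
          * betaFn (s + α) ((2 * m + 1 : ℝ) - s + β) / betaFn α β)
      atTop
      (nhds ((1 / betaFn α β) * ∫ x in (0:ℝ)..(1/2), x ^ (α - 1) * (1 - x) ^ (β - 1))) := by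
  refine ((tendsto_integral_binomLowerHalf_mul (intervalIntegrable_betaIntegrand hα hβ)).const_mul
    (1 / betaFn α β)).congr fun m => ?_
  rw [← sum_div, sum_choose_mul_betaFn hα hβ, one_div_mul_eq_div]
end

section
/- Let ξ > 0 and τ > 0 be reals. Every real r satisfying r ≥ 1 + (τ/(2ξ))^{2/3} (and r > 1) satisfies the adaptive stopping sample-size condition τ·(1/√(r−1) − 1/√r) ≤ ξ. -/
/-- Every real `r > 1` with `r ≥ 1 + (τ/(2ξ))^{2/3}` satisfies the adaptive stopping
sample-size condition `τ (1/√(r-1) - 1/√r) ≤ ξ`. -/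
theorem adaptive_stopping_sufficient (ξ τ r : ℝ) (hξ : 0 < ξ) (hτ : 0 < τ)
    (hr : 1 < r) (hr' : 1 + (τ / (2 * ξ)) ^ ((2 : ℝ) / 3) ≤ r) :
    τ * (1 / Real.sqrt (r - 1) - 1 / Real.sqrt r) ≤ ξ := by
  set a := Real.sqrt (r - 1) with ha_def
  set b := Real.sqrt r with hb_def
  have hr1 : (0:ℝ) < r - 1 := by linarith
  have ha : 0 < a := Real.sqrt_pos.mpr hr1
  have hb : 0 < b := Real.sqrt_pos.mpr (by linarith)
  have ha2 : a ^ 2 = r - 1 := Real.sq_sqrt hr1.le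
  have hb2 : b ^ 2 = r := Real.sq_sqrt (by linarith)
  have hab : a ≤ b := Real.sqrt_le_sqrt (by linarith)
  have hc : (0:ℝ) < τ / (2 * ξ) := by positivity
  -- τ/(2ξ) ≤ a^3
  have h1 : (τ / (2 * ξ)) ^ ((2 : ℝ) / 3) ≤ r - 1 := by linarith
  have h2 : ((τ / (2 * ξ)) ^ ((2 : ℝ) / 3)) ^ ((3 : ℝ) / 2) ≤ (r - 1) ^ ((3 : ℝ) / 2) :=
    Real.rpow_le_rpow (Real.rpow_nonneg hc.le _) h1 (by norm_num)
  rw [← Real.rpow_mul hc.le] at h2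
  norm_num [Real.rpow_one] at h2
  have h3 : (r - 1) ^ ((3 : ℝ) / 2) = a ^ 3 := by
    rw [ha_def, Real.sqrt_eq_rpow, ← Real.rpow_natCast ((r-1) ^ ((1:ℝ)/2)) 3,
      ← Real.rpow_mul hr1.le]
    norm_num
  rw [h3] at h2
  -- key inequality: 1/a - 1/b ≤ 1/(2 a^3)
  have key : 1 / a - 1 / b ≤ 1 / (2 * a ^ 3) := by
    rw [div_sub_div _ _ ha.ne' hb.ne', div_le_div_iff₀ (by positivity) (by positivity)]
    nlinarith [sq_nonneg (b - a), mul_pos ha hb, sq_nonneg a, mul_pos (mul_pos ha ha) hb]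
  calc τ * (1 / a - 1 / b) ≤ τ * (1 / (2 * a ^ 3)) := by
        exact mul_le_mul_of_nonneg_left key hτ.le
    _ ≤ ξ := by
        rw [div_le_iff₀ (by positivity : (0:ℝ) < 2 * ξ)] at h2
        rw [mul_one_div, div_le_iff₀ (by positivity)]
        nlinarith [h2]
end
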